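/- Let λ > 2. For every real number x with 1 < x < λ/2 (and likewise for every x with −λ/2 < x < −1), the complex number x does not belong to the closure in ℂ of the orbit {g • i : g ∈ Γ_λ}, where i is the imaginary unit of the upper half-plane and • is the Möbius action. (Equivalently: the open intervals (1, λ/2) and (−λ/2, −1), which represent the funnel of the infinite-area Hecke triangle surface, are disjoint from the limit set of Γ_λ.) -/

import Mathlib

open scoped MatrixGroups UpperHalfPlane
open UpperHalfPlane

/-!
Ping-pong for the Hecke group. Since `S • i = i` and `S²` acts trivially, every point of the
orbit `Γ_λ • i` is `T^n S T^{m₁} S T^{m₂} ⋯ S T^{mₖ} • i` with all `mⱼ ≠ 0`. For `λ ≥ 2` the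
point `S T^{m₁} ⋯ S T^{mₖ} • i` lies in the closed unit disk: if `|w| ≤ 1` and `m ≠ 0` then
`|w + mλ| ≥ λ - 1 ≥ 1`, so `S` (that is, `w ↦ -1/w`) maps it back into the disk. Hence the orbit
lies within distance `1` of `λℤ`, while a real `x` with `1 < |x| < λ/2` keeps a positive distance
from that set.
-/

theorem Subgroup.smul_mem_of_mem_closure {G α : Type*} [Group G] [MulAction G α] {s : Set G}
    {X : Set α} {a : α} (ha : a ∈ X) (hX : ∀ g ∈ s, ∀ y ∈ X, g • y ∈ X ∧ g⁻¹ • y ∈ X)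
    {g : G} (hg : g ∈ Subgroup.closure s) : g • a ∈ X := by
  induction hg using Subgroup.closure_induction_left with
  | one => simpa
  | mul_left x hx y _ ih => simpa [mul_smul] using (hX x hx _ ih).1
  | inv_mul_cancel x hx y _ ih => simpa [mul_smul] using (hX x hx _ ih).2

namespace HeckeGroup

variable {lam : ℝ} {S T : SL(2, ℝ)}

lemma coe_smul_of_coe_eq_S (hS : (S : Matrix (Fin 2) (Fin 2) ℝ) = !![0, 1; -1, 0]) (z : ℍ) :
    ((S • z : ℍ) : ℂ) = -(z : ℂ)⁻¹ := by
  rw [coe_specialLinearGroup_apply]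
  simp [hS, inv_neg]

lemma smul_smul_of_coe_eq_S (hS : (S : Matrix (Fin 2) (Fin 2) ℝ) = !![0, 1; -1, 0]) (z : ℍ) :
    S • S • z = z := by
  ext
  rw [coe_smul_of_coe_eq_S hS, coe_smul_of_coe_eq_S hS, inv_neg, neg_neg, inv_inv]

lemma inv_smul_of_coe_eq_S (hS : (S : Matrix (Fin 2) (Fin 2) ℝ) = !![0, 1; -1, 0]) (z : ℍ) :
    S⁻¹ • z = S • z := by
  rw [inv_smul_eq_iff, smul_smul_of_coe_eq_S hS]

lemma smul_I_of_coe_eq_S (hS : (S : Matrix (Fin 2) (Fin 2) ℝ) = !![0, 1; -1, 0]) :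
    S • I = I := by
  ext
  rw [coe_smul_of_coe_eq_S hS, coe_I, Complex.inv_I, neg_neg]

lemma zpow_smul_of_coe_eq_T (hT : (T : Matrix (Fin 2) (Fin 2) ℝ) = !![1, lam; 0, 1])
    (n : ℤ) (z : ℍ) : T ^ n • z = (n * lam) +ᵥ z := by
  have hT₁ (z : ℍ) : T • z = lam +ᵥ z := by
    ext
    rw [coe_specialLinearGroup_apply, coe_vadd]
    simp [hT, add_comm]
  induction n using Int.induction_on generalizing z with
  | zero => simp
  | succ k ih => rw [zpow_add_one, mul_smul, hT₁, ih, vadd_vadd]; push_cast; ring_nf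
  | pred k ih =>
    have hT_inv : T⁻¹ • z = -lam +ᵥ z := by
      rw [inv_smul_eq_iff, hT₁, vadd_vadd, add_neg_cancel, zero_vadd]
    rw [zpow_sub_one, mul_smul, hT_inv, ih, vadd_vadd]
    push_cast; ring_nf

lemma one_le_norm_intCast_mul_add (hlam : 2 ≤ lam) {m : ℤ} (hm : m ≠ 0) {w : ℂ}
    (hw : ‖w‖ ≤ 1) : 1 ≤ ‖((m * lam : ℝ) : ℂ) + w‖ := by
  have hm' : (1 : ℝ) ≤ |(m : ℝ)| := by exact_mod_cast Int.one_le_abs hm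
  have htri := norm_sub_le (((m * lam : ℝ) : ℂ) + w) w
  rw [add_sub_cancel_right, Complex.norm_real, Real.norm_eq_abs, abs_mul,
    abs_of_nonneg (by linarith : (0 : ℝ) ≤ lam)] at htri
  nlinarith

inductive ReducedWordOrbit (S T : SL(2, ℝ)) : ℍ → Prop
  | base : ReducedWordOrbit S T I
  | step {m : ℤ} {z : ℍ} : m ≠ 0 → ReducedWordOrbit S T z → ReducedWordOrbit S T (S • T ^ m • z)

lemma ReducedWordOrbit.norm_le_one (hlam : 2 ≤ lam)
    (hS : (S : Matrix (Fin 2) (Fin 2) ℝ) = !![0, 1; -1, 0])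
    (hT : (T : Matrix (Fin 2) (Fin 2) ℝ) = !![1, lam; 0, 1]) {z : ℍ}
    (hz : ReducedWordOrbit S T z) : ‖(z : ℂ)‖ ≤ 1 := by
  induction hz with
  | base => simp
  | step hm _ ih =>
    rw [coe_smul_of_coe_eq_S hS, zpow_smul_of_coe_eq_T hT, coe_vadd, norm_neg, norm_inv]
    exact inv_le_one_of_one_le₀ (one_le_norm_intCast_mul_add hlam hm ih)

lemma ReducedWordOrbit.exists_smul_zpow_smul_eq
    (hS : (S : Matrix (Fin 2) (Fin 2) ℝ) = !![0, 1; -1, 0]) {w : ℍ}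
    (hw : ReducedWordOrbit S T w) (n : ℤ) :
    ∃ (k : ℤ) (w' : ℍ), ReducedWordOrbit S T w' ∧ S • T ^ n • w = T ^ k • w' := by
  rcases eq_or_ne n 0 with rfl | hn
  · rw [zpow_zero, one_smul]
    cases hw with
    | base => exact ⟨0, I, .base, by rw [zpow_zero, one_smul, smul_I_of_coe_eq_S hS]⟩
    | step _ hz => exact ⟨_, _, hz, smul_smul_of_coe_eq_S hS _⟩
  · exact ⟨0, _, hw.step hn, by rw [zpow_zero, one_smul]⟩

lemma exists_zpow_smul_eq_of_mem_closure
    (hS : (S : Matrix (Fin 2) (Fin 2) ℝ) = !![0, 1; -1, 0]) {g : SL(2, ℝ)}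
    (hg : g ∈ Subgroup.closure {S, T}) :
    ∃ (n : ℤ) (w : ℍ), ReducedWordOrbit S T w ∧ g • I = T ^ n • w := by
  refine Subgroup.smul_mem_of_mem_closure (X := {z | ∃ n w, ReducedWordOrbit S T w ∧ z = T ^ n • w})
    ⟨0, I, .base, by rw [zpow_zero, one_smul]⟩ ?_ hg
  rintro g (rfl | rfl) _ ⟨n, w, hw, rfl⟩
  · rw [inv_smul_of_coe_eq_S hS, and_self]
    exact hw.exists_smul_zpow_smul_eq hS n
  · refine ⟨⟨n + 1, w, hw, ?_⟩, ⟨n - 1, w, hw, ?_⟩⟩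
    · rw [smul_smul, ← zpow_one_add, add_comm]
    · rw [smul_smul, ← zpow_neg_one, ← zpow_add, neg_add_eq_sub]

lemma exists_dist_intCast_mul_le_one_of_mem_closure (hlam : 2 ≤ lam)
    (hS : (S : Matrix (Fin 2) (Fin 2) ℝ) = !![0, 1; -1, 0])
    (hT : (T : Matrix (Fin 2) (Fin 2) ℝ) = !![1, lam; 0, 1]) {g : SL(2, ℝ)}
    (hg : g ∈ Subgroup.closure {S, T}) :
    ∃ n : ℤ, dist ((g • I : ℍ) : ℂ) ((n * lam : ℝ) : ℂ) ≤ 1 := by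
  obtain ⟨n, w, hw, hgw⟩ := exists_zpow_smul_eq_of_mem_closure hS hg
  refine ⟨n, ?_⟩
  rw [hgw, zpow_smul_of_coe_eq_T hT, coe_vadd, dist_eq_norm, add_sub_cancel_left]
  exact hw.norm_le_one hlam hS hT

end HeckeGroup

lemma min_abs_le_abs_sub_intCast_mul {lam : ℝ} (hlam : 0 ≤ lam) (x : ℝ) (n : ℤ) :
    min |x| (lam - |x|) ≤ |x - n * lam| := by
  rcases eq_or_ne n 0 with rfl | hn
  · simp
  · have hn' : (1 : ℝ) ≤ |(n : ℝ)| := by exact_mod_cast Int.one_le_abs hn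
    have htri := abs_sub_abs_le_abs_sub ((n : ℝ) * lam) x
    rw [abs_sub_comm, abs_mul, abs_of_nonneg hlam] at htri
    exact (min_le_right _ _).trans (by nlinarith)

open HeckeGroup in
theorem funnel_interval_not_in_limit_set
    (lam : ℝ) (hlam : 2 < lam)
    (S T : SL(2, ℝ))
    (hS : (S : Matrix (Fin 2) (Fin 2) ℝ) = !![0, 1; -1, 0])
    (hT : (T : Matrix (Fin 2) (Fin 2) ℝ) = !![1, lam; 0, 1])
    (Γ : Subgroup SL(2, ℝ)) (hΓ : Γ = Subgroup.closure {S, T}) :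
    ∀ x : ℝ, ((1 < x ∧ x < lam / 2) ∨ (-lam / 2 < x ∧ x < -1)) →
      ((x : ℂ) ∉ closure {w : ℂ | ∃ g ∈ Γ, w = ((g • UpperHalfPlane.I : ℍ) : ℂ)}) := by
  intro x hx
  have hx_abs : 1 < |x| ∧ |x| < lam / 2 := by
    rcases hx with ⟨h₁, h₂⟩ | ⟨h₁, h₂⟩ <;> constructor <;> cases abs_cases x <;> linarith
  set r := min |x| (lam - |x|) - 1
  have hr : 0 < r := by
    simp only [r, sub_pos, lt_min_iff]
    constructor <;> linarith
  have horbit : {w : ℂ | ∃ g ∈ Γ, w = ((g • I : ℍ) : ℂ)} ⊆ (Metric.ball (x : ℂ) r)ᶜ := by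
    rintro _ ⟨g, hg, rfl⟩ hball
    obtain ⟨n, hn⟩ := exists_dist_intCast_mul_le_one_of_mem_closure hlam.le hS hT (hΓ ▸ hg)
    have hx_far := min_abs_le_abs_sub_intCast_mul (zero_le_two.trans hlam.le) x n
    have htri := dist_triangle (x : ℂ) (g • I : ℍ) ((n * lam : ℝ) : ℂ)
    rw [Complex.isometry_ofReal.dist_eq, Real.dist_eq] at htri
    rw [Metric.mem_ball, dist_comm] at hball
    linarith
  exact fun hmem =>
    closure_minimal horbit Metric.isOpen_ball.isClosed_compl hmem (Metric.mem_ball_self hr)
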